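/- Let (u,τ,S) be a twice continuously differentiable solution of the full compressible Euler equations τ_t − u_x = 0, u_t + p_x = 0, S_t = 0 (p = K e^{S/c_v} τ^{−γ}) on an open subset of ℝ×ℝ with τ > 0. Then the gradient variables satisfy the Riccati equations α_t + c·α_x = k₁·(k₂·(3α + β) + αβ − α²) and β_t − c·β_x = k₁·(−k₂·(α + 3β) + αβ − β²) at every point, where k₁ = ((γ+1)K_c/(2(γ−1)))·η^{2/(γ−1)} and k₂ = ((γ−1)/(γ(γ+1)))·η·m_x. -/

import Mathlib

open Real Set MeasureTheory

noncomputable section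

/-- Partial derivative in the spatial variable `x`. -/
def pdx (f : ℝ → ℝ → ℝ) (x t : ℝ) : ℝ := deriv (fun y => f y t) x

/-- Partial derivative in the time variable `t`. -/
def pdt (f : ℝ → ℝ → ℝ) (x t : ℝ) : ℝ := deriv (fun s => f x s) t

/-- The time strip `ℝ × [0, T)`, where `T` is a real number or `+∞`. -/
def strip (T : EReal) : Set (ℝ × ℝ) := {p : ℝ × ℝ | 0 ≤ p.2 ∧ (p.2 : EReal) < T}

/-- `η = (2√(Kγ)/(γ−1)) τ^{−(γ−1)/2}`. -/
def etaP (K γ : ℝ) (τ : ℝ → ℝ → ℝ) (x t : ℝ) : ℝ :=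
  2 * Real.sqrt (K * γ) / (γ - 1) * τ x t ^ (-(γ - 1) / 2)

/-- Gradient variable `α = s_x = u_x + η_x` for the p-system. -/
def alphaP (K γ : ℝ) (u τ : ℝ → ℝ → ℝ) (x t : ℝ) : ℝ :=
  pdx u x t + pdx (etaP K γ τ) x t

/-- Gradient variable `β = r_x = u_x − η_x` for the p-system. -/
def betaP (K γ : ℝ) (u τ : ℝ → ℝ → ℝ) (x t : ℝ) : ℝ :=
  pdx u x t - pdx (etaP K γ τ) x t

/-- The p-system `τ_t − u_x = 0`, `u_t + p_x = 0` with `p = K τ^{−γ}`, at the point `(x,t)`. -/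
def pSystem (K γ : ℝ) (u τ : ℝ → ℝ → ℝ) (x t : ℝ) : Prop :=
  pdt τ x t - pdx u x t = 0 ∧
  pdt u x t + pdx (fun y s => K * τ y s ^ (-γ)) x t = 0

/-- Riemann invariant `s = u + η`. -/
def sRi (K γ : ℝ) (u τ : ℝ → ℝ → ℝ) (x t : ℝ) : ℝ := u x t + etaP K γ τ x t

/-- Riemann invariant `r = u − η`. -/
def rRi (K γ : ℝ) (u τ : ℝ → ℝ → ℝ) (x t : ℝ) : ℝ := u x t - etaP K γ τ x t

/-- The Lagrangian wave speed `c = √(Kγ) τ^{−(γ+1)/2}`. -/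
def cP (K γ : ℝ) (τ : ℝ → ℝ → ℝ) (x t : ℝ) : ℝ :=
  Real.sqrt (K * γ) * τ x t ^ (-(γ + 1) / 2)

/-- The constant `K_τ = (2√(Kγ)/(γ−1))^{2/(γ−1)}`. -/
def KtauC (K γ : ℝ) : ℝ := (2 * Real.sqrt (K * γ) / (γ - 1)) ^ (2 / (γ - 1))

/-- The constant `K_c = √(Kγ) K_τ^{−(γ+1)/2}`. -/
def KcC (K γ : ℝ) : ℝ := Real.sqrt (K * γ) * KtauC K γ ^ (-(γ + 1) / 2)

/-- `k₁ = ((γ+1)K_c/(2(γ−1))) η^{2/(γ−1)}`. -/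
def k1P (K γ : ℝ) (τ : ℝ → ℝ → ℝ) (x t : ℝ) : ℝ :=
  (γ + 1) * KcC K γ / (2 * (γ - 1)) * etaP K γ τ x t ^ (2 / (γ - 1))
/-- `m = e^{S/(2c_v)}`. -/
def mF (cv : ℝ) (S : ℝ → ℝ → ℝ) (x t : ℝ) : ℝ := Real.exp (S x t / (2 * cv))

/-- The ideal polytropic pressure `p = K e^{S/c_v} τ^{−γ}`. -/
def pF (K cv γ : ℝ) (τ S : ℝ → ℝ → ℝ) (x t : ℝ) : ℝ :=
  K * Real.exp (S x t / cv) * τ x t ^ (-γ)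

/-- The full compressible Euler equations `τ_t − u_x = 0`, `u_t + p_x = 0`, `S_t = 0`
with `p = K e^{S/c_v} τ^{−γ}`, at the point `(x,t)`. -/
def fullEuler (K cv γ : ℝ) (u τ S : ℝ → ℝ → ℝ) (x t : ℝ) : Prop :=
  pdt τ x t - pdx u x t = 0 ∧
  pdt u x t + pdx (pF K cv γ τ S) x t = 0 ∧
  pdt S x t = 0

/-- Wave speed `c = K_c m η^{(γ+1)/(γ−1)}` for the full Euler equations. -/
def cF (K cv γ : ℝ) (τ S : ℝ → ℝ → ℝ) (x t : ℝ) : ℝ :=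
  KcC K γ * mF cv S x t * etaP K γ τ x t ^ ((γ + 1) / (γ - 1))

/-- Gradient variable `α = u_x + m η_x + ((γ−1)/γ) m_x η` for the full Euler equations. -/
def alphaF (K cv γ : ℝ) (u τ S : ℝ → ℝ → ℝ) (x t : ℝ) : ℝ :=
  pdx u x t + mF cv S x t * pdx (etaP K γ τ) x t
    + (γ - 1) / γ * pdx (mF cv S) x t * etaP K γ τ x t

/-- Gradient variable `β = u_x − m η_x − ((γ−1)/γ) m_x η` for the full Euler equations. -/
def betaF (K cv γ : ℝ) (u τ S : ℝ → ℝ → ℝ) (x t : ℝ) : ℝ :=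
  pdx u x t - mF cv S x t * pdx (etaP K γ τ) x t
    - (γ - 1) / γ * pdx (mF cv S) x t * etaP K γ τ x t

/-- `k₂ = ((γ−1)/(γ(γ+1))) η m_x`. -/
def k2F (K cv γ : ℝ) (τ S : ℝ → ℝ → ℝ) (x t : ℝ) : ℝ :=
  (γ - 1) / (γ * (γ + 1)) * etaP K γ τ x t * pdx (mF cv S) x t

/-- Weighted gradient variable `α_ε = η^{2ε/(γ−1)} α`. -/
def aeps (K cv γ ε : ℝ) (u τ S : ℝ → ℝ → ℝ) (x t : ℝ) : ℝ :=
  etaP K γ τ x t ^ (2 * ε / (γ - 1)) * alphaF K cv γ u τ S x t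

/-- Weighted gradient variable `β_ε = η^{2ε/(γ−1)} β`. -/
def beps (K cv γ ε : ℝ) (u τ S : ℝ → ℝ → ℝ) (x t : ℝ) : ℝ :=
  etaP K γ τ x t ^ (2 * ε / (γ - 1)) * betaF K cv γ u τ S x t

/-- `k_{1ε} = ((γ+1)K_c/(2(γ−1))) η^{(2/(γ−1))(1−ε)}`. -/
def k1e (K γ ε : ℝ) (τ : ℝ → ℝ → ℝ) (x t : ℝ) : ℝ :=
  (γ + 1) * KcC K γ / (2 * (γ - 1)) * etaP K γ τ x t ^ (2 / (γ - 1) * (1 - ε))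

/-- `k_{2ε} = ((γ−1)/(γ(γ+1))) η^{1+2ε/(γ−1)} m_x`. -/
def k2e (K cv γ ε : ℝ) (τ S : ℝ → ℝ → ℝ) (x t : ℝ) : ℝ :=
  (γ - 1) / (γ * (γ + 1)) * etaP K γ τ x t ^ (1 + 2 * ε / (γ - 1)) * pdx (mF cv S) x t

/-!
With `c_P = √(Kγ) τ^{-(γ+1)/2}` and `Q = m η_x + ((γ-1)/γ) m_x η`, the system reads
`η_t = -c_P u_x`, `m_t = 0`, `u_t = -p_x = -c Q` with `c = m c_P`, and `α = u_x + Q`,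
`β = u_x - Q`. Differentiating `u_t = -c Q` in `x` and commuting the mixed partials, the
second-order terms `u_xx` and `Q_x` cancel from `α_t + c α_x`, which becomes
`-(c_x Q + (m c_{P,x} + ((γ-1)/γ) m_x c_P) u_x)`, and symmetrically for `β`. For the polytropic
law `c_P = (γ-1) η / (2τ)`, `c_{P,x} = (γ+1) η_x / (2τ)` and `k₁ = (γ+1)/(4τ)`, which turns these
into the stated quadratic right-hand sides.
-/

open Function (uncurry)
open Topology

section PartialDerivatives

variable {f g : ℝ → ℝ → ℝ} {Ω : Set (ℝ × ℝ)} {x t : ℝ}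

theorem hasDerivAt_slice_x {F : ℝ × ℝ → ℝ} {F' : ℝ × ℝ →L[ℝ] ℝ} (h : HasFDerivAt F F' (x, t)) :
    HasDerivAt (fun y => F (y, t)) (F' (1, 0)) x :=
  h.comp_hasDerivAt x ((hasDerivAt_id x).prodMk (hasDerivAt_const x t))

theorem hasDerivAt_slice_t {F : ℝ × ℝ → ℝ} {F' : ℝ × ℝ →L[ℝ] ℝ} (h : HasFDerivAt F F' (x, t)) :
    HasDerivAt (fun s => F (x, s)) (F' (0, 1)) t :=
  h.comp_hasDerivAt t ((hasDerivAt_const t x).prodMk (hasDerivAt_id t))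

theorem pdx_eq_fderiv (h : DifferentiableAt ℝ (uncurry f) (x, t)) :
    pdx f x t = fderiv ℝ (uncurry f) (x, t) (1, 0) :=
  (hasDerivAt_slice_x h.hasFDerivAt).deriv

theorem pdt_eq_fderiv (h : DifferentiableAt ℝ (uncurry f) (x, t)) :
    pdt f x t = fderiv ℝ (uncurry f) (x, t) (0, 1) :=
  (hasDerivAt_slice_t h.hasFDerivAt).deriv

theorem DifferentiableAt.slice_x (h : DifferentiableAt ℝ (uncurry f) (x, t)) :
    DifferentiableAt ℝ (fun y => f y t) x :=
  (hasDerivAt_slice_x h.hasFDerivAt).differentiableAt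

theorem DifferentiableAt.slice_t (h : DifferentiableAt ℝ (uncurry f) (x, t)) :
    DifferentiableAt ℝ (fun s => f x s) t :=
  (hasDerivAt_slice_t h.hasFDerivAt).differentiableAt

theorem pdx_congr (h : uncurry f =ᶠ[𝓝 (x, t)] uncurry g) : pdx f x t = pdx g x t :=
  Filter.EventuallyEq.deriv_eq <|
    ((continuous_id.prodMk continuous_const).tendsto x).eventually h

theorem pdt_congr (h : uncurry f =ᶠ[𝓝 (x, t)] uncurry g) : pdt f x t = pdt g x t :=
  Filter.EventuallyEq.deriv_eq <|
    ((continuous_const.prodMk continuous_id).tendsto t).eventually h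

variable {n m : WithTop ℕ∞}

theorem ContDiffOn.hasDerivAt_pdx (hf : ContDiffOn ℝ n (uncurry f) Ω) (hΩ : IsOpen Ω)
    (hn : n ≠ 0) (hp : (x, t) ∈ Ω) : HasDerivAt (fun y => f y t) (pdx f x t) x :=
  ((hf.contDiffAt (hΩ.mem_nhds hp)).differentiableAt hn).slice_x.hasDerivAt

theorem ContDiffOn.hasDerivAt_pdt (hf : ContDiffOn ℝ n (uncurry f) Ω) (hΩ : IsOpen Ω)
    (hn : n ≠ 0) (hp : (x, t) ∈ Ω) : HasDerivAt (fun s => f x s) (pdt f x t) t :=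
  ((hf.contDiffAt (hΩ.mem_nhds hp)).differentiableAt hn).slice_t.hasDerivAt

theorem ContDiffOn.uncurry_pdx (hf : ContDiffOn ℝ n (uncurry f) Ω) (hΩ : IsOpen Ω)
    (hmn : m + 1 ≤ n) : ContDiffOn ℝ m (uncurry (pdx f)) Ω := by
  refine ((hf.fderiv_of_isOpen hΩ hmn).clm_apply
    (contDiffOn_const (c := ((1 : ℝ), (0 : ℝ))))).congr fun q hq => ?_
  exact pdx_eq_fderiv ((hf.contDiffAt (hΩ.mem_nhds hq)).differentiableAt
    (ne_bot_of_le_ne_bot (by simp) hmn))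

theorem pdt_pdx_comm (hf : ContDiffOn ℝ 2 (uncurry f) Ω) (hΩ : IsOpen Ω) (hp : (x, t) ∈ Ω) :
    pdt (pdx f) x t = pdx (pdt f) x t := by
  have hf' : ContDiffOn ℝ 1 (fderiv ℝ (uncurry f)) Ω := hf.fderiv_of_isOpen hΩ (by norm_num)
  have hd2 : DifferentiableAt ℝ (fderiv ℝ (uncurry f)) (x, t) :=
    (hf'.contDiffAt (hΩ.mem_nhds hp)).differentiableAt one_ne_zero
  have hfd : ∀ᶠ q in 𝓝 (x, t), DifferentiableAt ℝ (uncurry f) q := by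
    filter_upwards [hΩ.mem_nhds hp] with q hq
    exact (hf.contDiffAt (hΩ.mem_nhds hq)).differentiableAt (by norm_num)
  have hx : uncurry (pdx f) =ᶠ[𝓝 (x, t)]
      uncurry fun y s => fderiv ℝ (uncurry f) (y, s) (1, 0) := by
    filter_upwards [hfd] with q hq using pdx_eq_fderiv hq
  have ht : uncurry (pdt f) =ᶠ[𝓝 (x, t)]
      uncurry fun y s => fderiv ℝ (uncurry f) (y, s) (0, 1) := by
    filter_upwards [hfd] with q hq using pdt_eq_fderiv hq
  rw [pdt_congr hx, pdx_congr ht,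
    pdt_eq_fderiv (hd2.clm_apply (differentiableAt_const _)),
    pdx_eq_fderiv (hd2.clm_apply (differentiableAt_const _))]
  change fderiv ℝ (fun q => fderiv ℝ (uncurry f) q (1, 0)) (x, t) (0, 1)
    = fderiv ℝ (fun q => fderiv ℝ (uncurry f) q (0, 1)) (x, t) (1, 0)
  rw [fderiv_clm_apply hd2 (differentiableAt_const _),
    fderiv_clm_apply hd2 (differentiableAt_const _)]
  simpa using ((hf.contDiffAt (hΩ.mem_nhds hp)).isSymmSndFDerivAt (by simp)) (0, 1) (1, 0)

end PartialDerivatives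

section GradientVariables

variable {κ : ℝ} {u E M a : ℝ → ℝ → ℝ} {Ω : Set (ℝ × ℝ)} {x t : ℝ}

def gradCorr (κ : ℝ) (E M : ℝ → ℝ → ℝ) (x t : ℝ) : ℝ :=
  M x t * pdx E x t + κ * pdx M x t * E x t

theorem hasDerivAt_gradCorr_t (hΩ : IsOpen Ω) (hp : (x, t) ∈ Ω)
    (hu : ContDiffOn ℝ 2 (uncurry u) Ω) (hE : ContDiffOn ℝ 2 (uncurry E) Ω)
    (hM : ContDiffOn ℝ 2 (uncurry M) Ω) {a' : ℝ} (ha : HasDerivAt (fun y => a y t) a' x)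
    (hEt : ∀ q ∈ Ω, pdt E q.1 q.2 = -(a q.1 q.2 * pdx u q.1 q.2))
    (hMt : ∀ q ∈ Ω, pdt M q.1 q.2 = 0) :
    HasDerivAt (fun s => gradCorr κ E M x s)
      (-(M x t * (a' * pdx u x t + a x t * pdx (pdx u) x t)
        + κ * pdx M x t * (a x t * pdx u x t))) t := by
  have hEx : ContDiffOn ℝ 1 (uncurry (pdx E)) Ω := hE.uncurry_pdx hΩ (by norm_num)
  have hMx : ContDiffOn ℝ 1 (uncurry (pdx M)) Ω := hM.uncurry_pdx hΩ (by norm_num)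
  have hux : ContDiffOn ℝ 1 (uncurry (pdx u)) Ω := hu.uncurry_pdx hΩ (by norm_num)
  have hEx_t : pdt (pdx E) x t = -(a' * pdx u x t + a x t * pdx (pdx u) x t) := by
    rw [pdt_pdx_comm hE hΩ hp, pdx_congr (f := pdt E) (g := fun y s => -(a y s * pdx u y s))
      (Filter.eventually_of_mem (hΩ.mem_nhds hp) fun q hq => hEt q hq)]
    exact (ha.mul (hux.hasDerivAt_pdx hΩ one_ne_zero hp)).neg.deriv
  have hMx_t : pdt (pdx M) x t = 0 := by
    rw [pdt_pdx_comm hM hΩ hp, pdx_congr (f := pdt M) (g := fun _ _ => 0)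
      (Filter.eventually_of_mem (hΩ.mem_nhds hp) fun q hq => hMt q hq)]
    exact deriv_const x 0
  have h := ((hM.hasDerivAt_pdt hΩ two_ne_zero hp).mul (hEx.hasDerivAt_pdt hΩ one_ne_zero hp)).add
    (((hMx.hasDerivAt_pdt hΩ one_ne_zero hp).const_mul κ).mul
      (hE.hasDerivAt_pdt hΩ two_ne_zero hp))
  rw [hMt (x, t) hp, hEx_t, hMx_t, hEt (x, t) hp] at h
  exact h.congr_deriv (by ring)

theorem gradient_transport (hΩ : IsOpen Ω) (hp : (x, t) ∈ Ω)
    (hu : ContDiffOn ℝ 2 (uncurry u) Ω) (hE : ContDiffOn ℝ 2 (uncurry E) Ω)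
    (hM : ContDiffOn ℝ 2 (uncurry M) Ω) {a' : ℝ} (ha : HasDerivAt (fun y => a y t) a' x)
    (hEt : ∀ q ∈ Ω, pdt E q.1 q.2 = -(a q.1 q.2 * pdx u q.1 q.2))
    (hMt : ∀ q ∈ Ω, pdt M q.1 q.2 = 0)
    (hut : ∀ q ∈ Ω, pdt u q.1 q.2 = -(M q.1 q.2 * a q.1 q.2 * gradCorr κ E M q.1 q.2)) :
    pdt (fun y s => pdx u y s + gradCorr κ E M y s) x t
        + M x t * a x t * pdx (fun y s => pdx u y s + gradCorr κ E M y s) x t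
      = -((pdx M x t * a x t + M x t * a') * gradCorr κ E M x t
          + (M x t * a' + κ * pdx M x t * a x t) * pdx u x t) ∧
    pdt (fun y s => pdx u y s - gradCorr κ E M y s) x t
        - M x t * a x t * pdx (fun y s => pdx u y s - gradCorr κ E M y s) x t
      = -((pdx M x t * a x t + M x t * a') * gradCorr κ E M x t
          - (M x t * a' + κ * pdx M x t * a x t) * pdx u x t) := by
  set Q := gradCorr κ E M
  have hux : ContDiffOn ℝ 1 (uncurry (pdx u)) Ω := hu.uncurry_pdx hΩ (by norm_num)
  have hEx : ContDiffOn ℝ 1 (uncurry (pdx E)) Ω := hE.uncurry_pdx hΩ (by norm_num)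
  have hMx : ContDiffOn ℝ 1 (uncurry (pdx M)) Ω := hM.uncurry_pdx hΩ (by norm_num)
  have hQ_x : HasDerivAt (fun y => Q y t) (pdx Q x t) x :=
    (((hM.hasDerivAt_pdx hΩ two_ne_zero hp).mul (hEx.hasDerivAt_pdx hΩ one_ne_zero hp)).add
      (((hMx.hasDerivAt_pdx hΩ one_ne_zero hp).const_mul κ).mul
        (hE.hasDerivAt_pdx hΩ two_ne_zero hp))).differentiableAt.hasDerivAt
  have hQ_t := hasDerivAt_gradCorr_t (κ := κ) hΩ hp hu hE hM ha hEt hMt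
  have hux_t : pdt (pdx u) x t
      = -((pdx M x t * a x t + M x t * a') * Q x t + M x t * a x t * pdx Q x t) := by
    rw [pdt_pdx_comm hu hΩ hp, pdx_congr (f := pdt u) (g := fun y s => -(M y s * a y s * Q y s))
      (Filter.eventually_of_mem (hΩ.mem_nhds hp) fun q hq => hut q hq)]
    exact (((hM.hasDerivAt_pdx hΩ two_ne_zero hp).mul ha).mul hQ_x).neg.deriv
  have hux_t' := hux.hasDerivAt_pdt hΩ one_ne_zero hp
  have hux_x := hux.hasDerivAt_pdx hΩ one_ne_zero hp
  rw [hux_t] at hux_t'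
  have hα_t : pdt (fun y s => pdx u y s + Q y s) x t = _ := (hux_t'.add hQ_t).deriv
  have hα_x : pdx (fun y s => pdx u y s + Q y s) x t = _ := (hux_x.add hQ_x).deriv
  have hβ_t : pdt (fun y s => pdx u y s - Q y s) x t = _ := (hux_t'.sub hQ_t).deriv
  have hβ_x : pdx (fun y s => pdx u y s - Q y s) x t = _ := (hux_x.sub hQ_x).deriv
  rw [hα_t, hα_x, hβ_t, hβ_x]
  constructor <;> ring

end GradientVariables

theorem HasDerivAt.const_mul_rpow {g : ℝ → ℝ} {g' z : ℝ} (C r : ℝ) (hg : HasDerivAt g g' z)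
    (hpos : 0 < g z) : HasDerivAt (fun z => C * g z ^ r) (r * (C * g z ^ r) / g z * g') z := by
  refine ((hg.rpow_const (Or.inl hpos.ne')).const_mul C).congr_deriv ?_
  rw [Real.rpow_sub_one hpos.ne']
  ring

section PolytropicGas

variable {K cv γ : ℝ} {u τ S : ℝ → ℝ → ℝ} {x t : ℝ} {Ω : Set (ℝ × ℝ)} {n : WithTop ℕ∞}

theorem etaP_pos (hK : 0 < K) (hγ : 1 < γ) (hτ : 0 < τ x t) : 0 < etaP K γ τ x t := by
  have : 0 < γ - 1 := by linarith
  have : 0 < Real.sqrt (K * γ) := Real.sqrt_pos.2 (by positivity)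
  unfold etaP
  positivity

theorem cP_eq_etaP (hγ : γ ≠ 1) (hτ : 0 < τ x t) :
    cP K γ τ x t = (γ - 1) / (2 * τ x t) * etaP K γ τ x t := by
  have hγ1 : γ - 1 ≠ 0 := sub_ne_zero.2 hγ
  rw [cP, etaP, show -(γ - 1) / 2 = -(γ + 1) / 2 + 1 by ring, Real.rpow_add_one hτ.ne']
  field_simp

theorem cP_eq_KcC_mul_rpow (hK : 0 < K) (hγ : 1 < γ) (hτ : 0 < τ x t) :
    cP K γ τ x t = KcC K γ * etaP K γ τ x t ^ ((γ + 1) / (γ - 1)) := by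
  have hγ1 : γ - 1 ≠ 0 := by linarith
  have hA : 0 < 2 * Real.sqrt (K * γ) / (γ - 1) := by
    have : 0 < γ - 1 := by linarith
    have : 0 < Real.sqrt (K * γ) := Real.sqrt_pos.2 (by positivity)
    positivity
  set A := 2 * Real.sqrt (K * γ) / (γ - 1)
  have hη : etaP K γ τ x t ^ ((γ + 1) / (γ - 1))
      = A ^ ((γ + 1) / (γ - 1)) * τ x t ^ (-(γ + 1) / 2) := by
    rw [etaP, Real.mul_rpow hA.le (Real.rpow_nonneg hτ.le _), ← Real.rpow_mul hτ.le]
    congr 2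
    field_simp
  have hKc : KcC K γ * A ^ ((γ + 1) / (γ - 1)) = Real.sqrt (K * γ) := by
    rw [KcC, KtauC, ← Real.rpow_mul hA.le, mul_assoc, ← Real.rpow_add hA,
      show 2 / (γ - 1) * (-(γ + 1) / 2) + (γ + 1) / (γ - 1) = 0 by field_simp; ring,
      Real.rpow_zero, mul_one]
  rw [hη, ← mul_assoc, hKc, cP]

theorem cF_eq_mF_mul_cP (hK : 0 < K) (hγ : 1 < γ) (hτ : 0 < τ x t) :
    cF K cv γ τ S x t = mF cv S x t * cP K γ τ x t := by
  rw [cF, cP_eq_KcC_mul_rpow hK hγ hτ]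
  ring

theorem k1P_eq (hK : 0 < K) (hγ : 1 < γ) (hτ : 0 < τ x t) :
    k1P K γ τ x t = (γ + 1) / (4 * τ x t) := by
  have hγ1 : γ - 1 ≠ 0 := by linarith
  have hη := etaP_pos hK hγ hτ
  have hc := cP_eq_KcC_mul_rpow hK hγ hτ
  rw [show (γ + 1) / (γ - 1) = 2 / (γ - 1) + 1 by field_simp; ring, Real.rpow_add_one hη.ne',
    cP_eq_etaP hγ.ne' hτ] at hc
  have hKc : KcC K γ * etaP K γ τ x t ^ (2 / (γ - 1)) = (γ - 1) / (2 * τ x t) :=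
    mul_right_cancel₀ hη.ne' (by rw [mul_assoc, ← hc])
  rw [k1P, mul_div_right_comm, mul_assoc, hKc]
  field_simp
  ring

theorem pdx_etaP (hγ : γ ≠ 1) (hτ : 0 < τ x t) (hd : DifferentiableAt ℝ (fun y => τ y t) x) :
    pdx (etaP K γ τ) x t = -(cP K γ τ x t * pdx τ x t) := by
  have h : HasDerivAt (fun y => etaP K γ τ y t)
      (-(γ - 1) / 2 * etaP K γ τ x t / τ x t * pdx τ x t) x :=
    hd.hasDerivAt.const_mul_rpow _ _ hτ
  rw [pdx, h.deriv, cP_eq_etaP hγ hτ]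
  field_simp

theorem pdt_etaP (hγ : γ ≠ 1) (hτ : 0 < τ x t) (hd : DifferentiableAt ℝ (fun s => τ x s) t) :
    pdt (etaP K γ τ) x t = -(cP K γ τ x t * pdt τ x t) := by
  have h : HasDerivAt (fun s => etaP K γ τ x s)
      (-(γ - 1) / 2 * etaP K γ τ x t / τ x t * pdt τ x t) t :=
    hd.hasDerivAt.const_mul_rpow _ _ hτ
  rw [pdt, h.deriv, cP_eq_etaP hγ hτ]
  field_simp

theorem hasDerivAt_cP (hγ : γ ≠ 1) (hτ : 0 < τ x t)
    (hd : DifferentiableAt ℝ (fun y => τ y t) x) :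
    HasDerivAt (fun y => cP K γ τ y t)
      ((γ + 1) / (2 * τ x t) * pdx (etaP K γ τ) x t) x := by
  refine (hd.hasDerivAt.const_mul_rpow _ _ hτ).congr_deriv ?_
  rw [pdx_etaP hγ hτ hd, cP, pdx]
  field_simp

theorem pdx_mF (hd : DifferentiableAt ℝ (fun y => S y t) x) :
    pdx (mF cv S) x t = mF cv S x t * (pdx S x t / (2 * cv)) :=
  (hd.hasDerivAt.div_const _).exp.deriv

theorem pdt_mF (hd : DifferentiableAt ℝ (fun s => S x s) t) :
    pdt (mF cv S) x t = mF cv S x t * (pdt S x t / (2 * cv)) :=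
  (hd.hasDerivAt.div_const _).exp.deriv

theorem pdx_pF (hK : 0 < K) (hγ : 1 < γ) (hτ : 0 < τ x t)
    (hdτ : DifferentiableAt ℝ (fun y => τ y t) x) (hdS : DifferentiableAt ℝ (fun y => S y t) x) :
    pdx (pF K cv γ τ S) x t
      = mF cv S x t * cP K γ τ x t * gradCorr ((γ - 1) / γ) (etaP K γ τ) (mF cv S) x t := by
  have hγ0 : γ ≠ 0 := by linarith
  have hγ1 : γ - 1 ≠ 0 := by linarith
  have hexp : Real.exp (S x t / cv) = mF cv S x t * mF cv S x t := by
    rw [mF, ← Real.exp_add]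
    ring_nf
  have hcP2 : cP K γ τ x t * cP K γ τ x t = K * γ * τ x t ^ (-γ - 1) := by
    rw [cP, mul_mul_mul_comm, ← Real.rpow_add hτ, Real.mul_self_sqrt (by positivity)]
    ring_nf
  have hpow : τ x t ^ (-γ) = τ x t ^ (-γ - 1) * τ x t := by
    rw [← Real.rpow_add_one hτ.ne']
    ring_nf
  have hη : etaP K γ τ x t = 2 * τ x t / (γ - 1) * cP K γ τ x t := by
    rw [cP_eq_etaP hγ.ne' hτ]
    field_simp
  have hp : HasDerivAt (fun y => pF K cv γ τ S y t)
      (K * (Real.exp (S x t / cv) * (pdx S x t / cv)) * τ x t ^ (-γ)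
        + K * Real.exp (S x t / cv) * (pdx τ x t * -γ * τ x t ^ (-γ - 1))) x :=
    ((hdS.hasDerivAt.div_const cv).exp.const_mul K).mul
      (hdτ.hasDerivAt.rpow_const (Or.inl hτ.ne'))
  rw [pdx, hp.deriv, gradCorr, pdx_etaP hγ.ne' hτ hdτ, pdx_mF hdS, hη, hexp, hpow,
    show pdx S x t / (2 * cv) = pdx S x t / cv / 2 by ring]
  generalize pdx S x t / cv = Sx
  field_simp
  linear_combination (mF cv S x t ^ 2 * (γ * pdx τ x t - τ x t * Sx)) * hcP2

theorem contDiffOn_etaP (hτ : ContDiffOn ℝ n (uncurry τ) Ω) (hpos : ∀ q ∈ Ω, 0 < τ q.1 q.2) :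
    ContDiffOn ℝ n (uncurry (etaP K γ τ)) Ω :=
  contDiffOn_const.mul (hτ.rpow_const_of_ne fun q hq => (hpos q hq).ne')

theorem contDiffOn_mF (hS : ContDiffOn ℝ n (uncurry S) Ω) :
    ContDiffOn ℝ n (uncurry (mF cv S)) Ω :=
  Real.contDiff_exp.comp_contDiffOn (hS.div_const _)

theorem alphaF_eq :
    alphaF K cv γ u τ S
      = fun y s => pdx u y s + gradCorr ((γ - 1) / γ) (etaP K γ τ) (mF cv S) y s := by
  ext y s
  rw [alphaF, gradCorr]
  ring

theorem betaF_eq :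
    betaF K cv γ u τ S
      = fun y s => pdx u y s - gradCorr ((γ - 1) / γ) (etaP K γ τ) (mF cv S) y s := by
  ext y s
  rw [betaF, gradCorr]
  ring

theorem fullEuler.evolution_eqs (h : fullEuler K cv γ u τ S x t) (hK : 0 < K) (hγ : 1 < γ)
    (hτ : 0 < τ x t) (hdτ : DifferentiableAt ℝ (uncurry τ) (x, t))
    (hdS : DifferentiableAt ℝ (uncurry S) (x, t)) :
    pdt (etaP K γ τ) x t = -(cP K γ τ x t * pdx u x t) ∧
    pdt (mF cv S) x t = 0 ∧
    pdt u x t = -(mF cv S x t * cP K γ τ x t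
      * gradCorr ((γ - 1) / γ) (etaP K γ τ) (mF cv S) x t) := by
  obtain ⟨hmass, hmomentum, hentropy⟩ := h
  refine ⟨?_, ?_, ?_⟩
  · rw [pdt_etaP hγ.ne' hτ hdτ.slice_t, sub_eq_zero.1 hmass]
  · rw [pdt_mF hdS.slice_t, hentropy, zero_div, mul_zero]
  · rw [eq_neg_of_add_eq_zero_left hmomentum, pdx_pF hK hγ hτ hdτ.slice_x hdS.slice_x]

end PolytropicGas

theorem fullEuler_riccati_equations_general
    (K cv γ : ℝ) (hK : 0 < K) (hγ : 1 < γ)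
    (Ω : Set (ℝ × ℝ)) (hΩ : IsOpen Ω)
    (u τ S : ℝ → ℝ → ℝ)
    (hu_reg : ContDiffOn ℝ 2 (fun p : ℝ × ℝ => u p.1 p.2) Ω)
    (hτ_reg : ContDiffOn ℝ 2 (fun p : ℝ × ℝ => τ p.1 p.2) Ω)
    (hS_reg : ContDiffOn ℝ 2 (fun p : ℝ × ℝ => S p.1 p.2) Ω)
    (hτ_pos : ∀ p ∈ Ω, 0 < τ p.1 p.2)
    (hpde : ∀ p ∈ Ω, fullEuler K cv γ u τ S p.1 p.2) :
    ∀ p ∈ Ω,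
      pdt (alphaF K cv γ u τ S) p.1 p.2 +
          cF K cv γ τ S p.1 p.2 * pdx (alphaF K cv γ u τ S) p.1 p.2 =
        k1P K γ τ p.1 p.2 *
          (k2F K cv γ τ S p.1 p.2 *
              (3 * alphaF K cv γ u τ S p.1 p.2 + betaF K cv γ u τ S p.1 p.2) +
            alphaF K cv γ u τ S p.1 p.2 * betaF K cv γ u τ S p.1 p.2 -
            (alphaF K cv γ u τ S p.1 p.2) ^ 2) ∧
      pdt (betaF K cv γ u τ S) p.1 p.2 -
          cF K cv γ τ S p.1 p.2 * pdx (betaF K cv γ u τ S) p.1 p.2 =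
        k1P K γ τ p.1 p.2 *
          (-(k2F K cv γ τ S p.1 p.2) *
              (alphaF K cv γ u τ S p.1 p.2 + 3 * betaF K cv γ u τ S p.1 p.2) +
            alphaF K cv γ u τ S p.1 p.2 * betaF K cv γ u τ S p.1 p.2 -
            (betaF K cv γ u τ S p.1 p.2) ^ 2) := by
  intro p hp
  have hτ := hτ_pos p hp
  have hd : ∀ {f : ℝ → ℝ → ℝ}, ContDiffOn ℝ 2 (uncurry f) Ω →
      ∀ q ∈ Ω, DifferentiableAt ℝ (uncurry f) q :=
    fun hf q hq => (hf.contDiffAt (hΩ.mem_nhds hq)).differentiableAt two_ne_zero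
  have hsys := fun q hq =>
    (hpde q hq).evolution_eqs hK hγ (hτ_pos q hq) (hd hτ_reg q hq) (hd hS_reg q hq)
  obtain ⟨hα, hβ⟩ := gradient_transport hΩ hp hu_reg (contDiffOn_etaP hτ_reg hτ_pos)
    (contDiffOn_mF hS_reg) (hasDerivAt_cP hγ.ne' hτ (hd hτ_reg p hp).slice_x)
    (fun q hq => (hsys q hq).1) (fun q hq => (hsys q hq).2.1) (fun q hq => (hsys q hq).2.2)
  rw [← alphaF_eq] at hα
  rw [← betaF_eq] at hβ
  rw [cP_eq_etaP hγ.ne' hτ] at hα hβ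
  rw [cF_eq_mF_mul_cP hK hγ hτ, k1P_eq hK hγ hτ, cP_eq_etaP hγ.ne' hτ]
  constructor
  · linear_combination (norm := skip) hα
    simp only [alphaF, betaF, gradCorr, k2F]
    field_simp
    ring
  · linear_combination (norm := skip) hβ
    simp only [alphaF, betaF, gradCorr, k2F]
    field_simp
    ring

/-- Riccati equations for the gradient variables of the full Euler equations. -/
theorem fullEuler_riccati_equations
    (K cv γ : ℝ) (hK : 0 < K) (hcv : 0 < cv) (hγ : 1 < γ)
    (Ω : Set (ℝ × ℝ)) (hΩ : IsOpen Ω)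
    (u τ S : ℝ → ℝ → ℝ)
    (hu_reg : ContDiffOn ℝ 2 (fun p : ℝ × ℝ => u p.1 p.2) Ω)
    (hτ_reg : ContDiffOn ℝ 2 (fun p : ℝ × ℝ => τ p.1 p.2) Ω)
    (hS_reg : ContDiffOn ℝ 2 (fun p : ℝ × ℝ => S p.1 p.2) Ω)
    (hτ_pos : ∀ p ∈ Ω, 0 < τ p.1 p.2)
    (hpde : ∀ p ∈ Ω, fullEuler K cv γ u τ S p.1 p.2) :
    ∀ p ∈ Ω,
      pdt (alphaF K cv γ u τ S) p.1 p.2 +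
          cF K cv γ τ S p.1 p.2 * pdx (alphaF K cv γ u τ S) p.1 p.2 =
        k1P K γ τ p.1 p.2 *
          (k2F K cv γ τ S p.1 p.2 *
              (3 * alphaF K cv γ u τ S p.1 p.2 + betaF K cv γ u τ S p.1 p.2) +
            alphaF K cv γ u τ S p.1 p.2 * betaF K cv γ u τ S p.1 p.2 -
            (alphaF K cv γ u τ S p.1 p.2) ^ 2) ∧
      pdt (betaF K cv γ u τ S) p.1 p.2 -
          cF K cv γ τ S p.1 p.2 * pdx (betaF K cv γ u τ S) p.1 p.2 =
        k1P K γ τ p.1 p.2 *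
          (-(k2F K cv γ τ S p.1 p.2) *
              (alphaF K cv γ u τ S p.1 p.2 + 3 * betaF K cv γ u τ S p.1 p.2) +
            alphaF K cv γ u τ S p.1 p.2 * betaF K cv γ u τ S p.1 p.2 -
            (betaF K cv γ u τ S p.1 p.2) ^ 2) :=
  fullEuler_riccati_equations_general K cv γ hK hγ Ω hΩ u τ S hu_reg hτ_reg hS_reg hτ_pos hpde
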